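/- For every δ ∈ (0, 1/2), the function f(u) = h2(δ ⋆ h2⁻¹(u)) is twice differentiable on the open interval (0, 1) and its second derivative satisfies f''(u) > 0 for all u ∈ (0, 1); in particular f is strictly convex on (0, 1). -/

import Mathlib

open MeasureTheory

/-- Binary entropy function (base 2), with the convention `0 * log₂ 0 = 0`
(automatic since `Real.logb 2 0 = 0`). -/
noncomputable def h2 (p : ℝ) : ℝ :=
  -(p * Real.logb 2 p) - (1 - p) * Real.logb 2 (1 - p)

/-- Inverse of the binary entropy function: for `q ≥ 0`, the unique `r ∈ [0, 1/2]`
with `h2 r = q` (realized as the infimum of the solution set); `0` for `q < 0`. -/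
noncomputable def h2inv (q : ℝ) : ℝ :=
  if q < 0 then 0 else sInf {r : ℝ | 0 ≤ r ∧ r ≤ 1 / 2 ∧ h2 r = q}

/-- Binary convolution `a ⋆ b = a(1-b) + (1-a)b`. -/
def bconv (a b : ℝ) : ℝ := a * (1 - b) + (1 - a) * b

/-!
Write `r = h2⁻¹(u)`, `s = δ ⋆ r = δ + (1 - 2δ) r` and `L(x) = log((1 - x)/x)`, so that
`h2' = L / log 2`. The chain rule and the inverse function rule give
`f'(u) = (1 - 2δ) L(s) / L(r)`, and since `L'(x) = -1/(x(1 - x))` and `h2⁻¹` is increasing,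
`f''(u) > 0` reduces to `g(s) > (1 - 2δ) g(r)` for `g(x) = x(1 - x) L(x)`.
The derivative `(1 - 2x) L(x) - 1` of `g` is strictly decreasing on `(0, 1/2)`, so `g` is strictly
concave on `(0, 1/2]`; as `s = (1 - 2δ) r + 2δ · 1/2` and `g(1/2) = 0`, this is the inequality.
-/

open Real Set Filter Topology

lemma h2_eq_binEntropy_div (p : ℝ) : h2 p = binEntropy p / log 2 := by
  unfold h2 binEntropy logb
  rw [log_inv, log_inv]
  ring

lemma h2_zero : h2 0 = 0 := by simp [h2_eq_binEntropy_div]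

lemma h2_half : h2 (1 / 2) = 1 := by
  rw [h2_eq_binEntropy_div, one_div, binEntropy_two_inv, div_self (log_pos one_lt_two).ne']

lemma continuous_h2 : Continuous h2 := by
  simpa only [funext h2_eq_binEntropy_div] using binEntropy_continuous.div_const (log 2)

lemma h2_strictMonoOn : StrictMonoOn h2 (Icc 0 (1 / 2)) := by
  intro a ha b hb hab
  rw [h2_eq_binEntropy_div, h2_eq_binEntropy_div, div_lt_div_iff_of_pos_right (log_pos one_lt_two)]
  rw [one_div] at ha hb
  exact binEntropy_strictMonoOn ha hb hab

lemma h2_mapsTo_Ioo : MapsTo h2 (Ioo 0 (1 / 2)) (Ioo 0 1) := fun r hr => by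
  have hIcc : r ∈ Icc (0 : ℝ) (1 / 2) := Ioo_subset_Icc_self hr
  rw [← h2_zero, ← h2_half]
  exact ⟨h2_strictMonoOn (left_mem_Icc.2 (by norm_num)) hIcc hr.1,
    h2_strictMonoOn hIcc (right_mem_Icc.2 (by norm_num)) hr.2⟩

lemma h2_surjOn_Ioo : SurjOn h2 (Ioo 0 (1 / 2)) (Ioo 0 1) := by
  have := intermediate_value_Ioo (by norm_num : (0 : ℝ) ≤ 1 / 2) continuous_h2.continuousOn
  rwa [h2_zero, h2_half] at this

lemma h2inv_h2 {r : ℝ} (hr : r ∈ Icc 0 (1 / 2)) : h2inv (h2 r) = r := by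
  have hnonneg : 0 ≤ h2 r := by
    rw [h2_eq_binEntropy_div]
    exact div_nonneg (binEntropy_nonneg hr.1 (by linarith [hr.2])) (log_pos one_lt_two).le
  have hsolutions : {r' : ℝ | 0 ≤ r' ∧ r' ≤ 1 / 2 ∧ h2 r' = h2 r} = {r} := by
    ext r'
    constructor
    · rintro ⟨h0, h1, h⟩
      exact h2_strictMonoOn.injOn ⟨h0, h1⟩ hr h
    · rintro rfl
      exact ⟨hr.1, hr.2, rfl⟩
  rw [h2inv, if_neg hnonneg.not_gt, hsolutions, csInf_singleton]

lemma h2inv_mem_Ioo {u : ℝ} (hu : u ∈ Ioo 0 1) : h2inv u ∈ Ioo 0 (1 / 2) := by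
  obtain ⟨r, hr, rfl⟩ := h2_surjOn_Ioo hu
  rwa [h2inv_h2 (Ioo_subset_Icc_self hr)]

lemma h2_h2inv {u : ℝ} (hu : u ∈ Ioo 0 1) : h2 (h2inv u) = u := by
  obtain ⟨r, hr, rfl⟩ := h2_surjOn_Ioo hu
  rw [h2inv_h2 (Ioo_subset_Icc_self hr)]

lemma h2inv_strictMonoOn : StrictMonoOn h2inv (Ioo 0 1) := fun u hu v hv huv => by
  have := h2_strictMonoOn.lt_iff_lt (Ioo_subset_Icc_self (h2inv_mem_Ioo hu))
    (Ioo_subset_Icc_self (h2inv_mem_Ioo hv))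
  rw [h2_h2inv hu, h2_h2inv hv] at this
  exact this.1 huv

lemma continuousAt_h2inv {u : ℝ} (hu : u ∈ Ioo 0 1) : ContinuousAt h2inv u := by
  obtain ⟨hr0, hr1⟩ := h2inv_mem_Ioo hu
  refine continuousAt_of_monotoneOn_of_image_mem_nhds h2inv_strictMonoOn.monotoneOn
    (Ioo_mem_nhds hu.1 hu.2) (mem_of_superset (Ioo_mem_nhds hr0 hr1) fun r hr => ?_)
  exact ⟨h2 r, h2_mapsTo_Ioo hr, h2inv_h2 (Ioo_subset_Icc_self hr)⟩

noncomputable def logRatio (x : ℝ) : ℝ := log (1 - x) - log x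

lemma logRatio_pos {x : ℝ} (hx : x ∈ Ioo 0 (1 / 2)) : 0 < logRatio x :=
  sub_pos.2 (log_lt_log hx.1 (by linarith [hx.2]))

lemma logRatio_strictAntiOn : StrictAntiOn logRatio (Ioo 0 1) := fun x hx y hy hxy => by
  have h1 := log_lt_log hx.1 hxy
  have h2 := log_lt_log (sub_pos.2 hy.2) (by linarith : 1 - y < 1 - x)
  unfold logRatio
  linarith

lemma hasDerivAt_logRatio {x : ℝ} (hx0 : x ≠ 0) (hx1 : x ≠ 1) :
    HasDerivAt logRatio (-(1 - x)⁻¹ - x⁻¹) x := by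
  have hlog : HasDerivAt (fun y => log (1 - y)) (-(1 - x)⁻¹) x :=
    (((hasDerivAt_id x).const_sub 1).log (sub_ne_zero.2 hx1.symm)).congr_deriv (by simp [neg_div])
  exact hlog.sub (hasDerivAt_log hx0)

lemma hasDerivAt_h2 {p : ℝ} (hp0 : p ≠ 0) (hp1 : p ≠ 1) :
    HasDerivAt h2 (logRatio p / log 2) p := by
  rw [funext h2_eq_binEntropy_div]
  exact (hasDerivAt_binEntropy hp0 hp1).div_const _

lemma hasDerivAt_h2inv {u : ℝ} (hu : u ∈ Ioo 0 1) :
    HasDerivAt h2inv (log 2 / logRatio (h2inv u)) u := by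
  obtain ⟨hr0, hr1⟩ := h2inv_mem_Ioo hu
  have hinv : ∀ᶠ v in 𝓝 u, h2 (h2inv v) = v := by
    filter_upwards [Ioo_mem_nhds hu.1 hu.2] with v hv using h2_h2inv hv
  simpa only [inv_div] using HasDerivAt.of_local_left_inverse (continuousAt_h2inv hu)
    (hasDerivAt_h2 hr0.ne' (by linarith)) (div_ne_zero (logRatio_pos ⟨hr0, hr1⟩).ne'
      (log_pos one_lt_two).ne') hinv

noncomputable def scaledLogRatio (x : ℝ) : ℝ := x * (1 - x) * logRatio x

lemma scaledLogRatio_half : scaledLogRatio (1 / 2) = 0 := by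
  norm_num [scaledLogRatio, logRatio]

lemma hasDerivAt_scaledLogRatio {x : ℝ} (hx0 : x ≠ 0) (hx1 : x ≠ 1) :
    HasDerivAt scaledLogRatio ((1 - 2 * x) * logRatio x - 1) x := by
  have hpoly : HasDerivAt (fun y => y * (1 - y)) (1 - 2 * x) x :=
    ((hasDerivAt_id x).mul ((hasDerivAt_id x).const_sub 1)).congr_deriv (by simp only [id_eq]; ring)
  refine (hpoly.mul (hasDerivAt_logRatio hx0 hx1)).congr_deriv ?_
  have : 1 - x ≠ 0 := sub_ne_zero.2 hx1.symm
  field_simp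
  ring

lemma strictConcaveOn_scaledLogRatio : StrictConcaveOn ℝ (Ioc 0 (1 / 2)) scaledLogRatio := by
  have hderiv : ∀ x ∈ Ioo (0 : ℝ) 1,
      HasDerivAt scaledLogRatio ((1 - 2 * x) * logRatio x - 1) x :=
    fun x hx => hasDerivAt_scaledLogRatio hx.1.ne' hx.2.ne
  refine StrictAntiOn.strictConcaveOn_of_deriv (convex_Ioc 0 (1 / 2))
    (fun x hx => (hderiv x ⟨hx.1, by linarith [hx.2]⟩).continuousAt.continuousWithinAt) ?_
  rw [interior_Ioc]
  intro x hx y hy hxy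
  have hx' : x ∈ Ioo (0 : ℝ) 1 := ⟨hx.1, by linarith [hx.2]⟩
  have hy' : y ∈ Ioo (0 : ℝ) 1 := ⟨hy.1, by linarith [hy.2]⟩
  rw [(hderiv x hx').deriv, (hderiv y hy').deriv, sub_lt_sub_iff_right]
  exact mul_lt_mul'' (by linarith) (logRatio_strictAntiOn hx' hy' hxy)
    (by linarith [hy.2]) (logRatio_pos hy).le

lemma bconv_eq (a b : ℝ) : bconv a b = a + (1 - 2 * a) * b := by
  unfold bconv
  ring

lemma hasDerivAt_bconv (a b : ℝ) : HasDerivAt (bconv a) (1 - 2 * a) b := by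
  simpa only [funext (bconv_eq a), mul_one] using
    ((hasDerivAt_id' b).const_mul (1 - 2 * a)).const_add a

lemma bconv_mem_Ioo {a b : ℝ} (ha0 : 0 ≤ a) (ha : a < 1 / 2) (hb : b ∈ Ioo 0 (1 / 2)) :
    bconv a b ∈ Ioo 0 (1 / 2) := by
  obtain ⟨hb0, hb1⟩ := hb
  rw [bconv_eq]
  constructor <;> nlinarith

lemma mul_scaledLogRatio_lt_scaledLogRatio_bconv {a b : ℝ} (ha : a ∈ Ioo 0 (1 / 2))
    (hb : b ∈ Ioo 0 (1 / 2)) :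
    (1 - 2 * a) * scaledLogRatio b < scaledLogRatio (bconv a b) := by
  have hconcave := strictConcaveOn_scaledLogRatio.2 (Ioo_subset_Ioc_self hb)
    (right_mem_Ioc.2 (by norm_num)) hb.2.ne (by linarith [ha.2] : 0 < 1 - 2 * a)
    (by linarith [ha.1] : 0 < 2 * a) (by ring)
  have hcomb : (1 - 2 * a) • b + (2 * a) • (1 / 2 : ℝ) = bconv a b := by
    rw [smul_eq_mul, smul_eq_mul, bconv_eq]
    ring
  rwa [hcomb, scaledLogRatio_half, smul_zero, add_zero, smul_eq_mul] at hconcave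

/-- The derivative of `u ↦ h2 (δ ⋆ h2⁻¹ u)` at `u = h2 r`. -/
noncomputable def slopeRatio (δ r : ℝ) : ℝ := (1 - 2 * δ) * logRatio (bconv δ r) / logRatio r

lemma exists_pos_hasDerivAt_slopeRatio {δ r : ℝ} (hδ : δ ∈ Ioo 0 (1 / 2))
    (hr : r ∈ Ioo 0 (1 / 2)) : ∃ d, 0 < d ∧ HasDerivAt (slopeRatio δ) d r := by
  obtain ⟨hr0, hr1⟩ := hr
  obtain ⟨hs0, hs1⟩ := bconv_mem_Ioo hδ.1.le hδ.2 ⟨hr0, hr1⟩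
  set s := bconv δ r
  have hc : 0 < 1 - 2 * δ := by linarith [hδ.2]
  have hL : 0 < logRatio r := logRatio_pos ⟨hr0, hr1⟩
  have hgap : 0 < scaledLogRatio s - (1 - 2 * δ) * scaledLogRatio r :=
    sub_pos.2 (mul_scaledLogRatio_lt_scaledLogRatio_bconv hδ ⟨hr0, hr1⟩)
  have hquot := (((hasDerivAt_logRatio hs0.ne' (by linarith)).comp r
    (hasDerivAt_bconv δ r)).const_mul (1 - 2 * δ)).div
    (hasDerivAt_logRatio hr0.ne' (by linarith)) hL.ne'
  refine ⟨(1 - 2 * δ) * (scaledLogRatio s - (1 - 2 * δ) * scaledLogRatio r) /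
    (r * (1 - r) * (s * (1 - s)) * logRatio r ^ 2), ?_, ?_⟩
  · have hden : 0 < r * (1 - r) * (s * (1 - s)) :=
      mul_pos (mul_pos hr0 (by linarith)) (mul_pos hs0 (by linarith))
    exact div_pos (mul_pos hc hgap) (mul_pos hden (pow_pos hL 2))
  · refine hquot.congr_deriv ?_
    have : 1 - r ≠ 0 := by linarith
    have : 1 - s ≠ 0 := by linarith
    rw [Function.comp_apply]
    unfold scaledLogRatio
    field_simp
    ring

lemma hasDerivAt_h2_bconv_h2inv {δ u : ℝ} (hδ0 : 0 ≤ δ) (hδ1 : δ < 1 / 2)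
    (hu : u ∈ Ioo 0 1) :
    HasDerivAt (fun v => h2 (bconv δ (h2inv v))) (slopeRatio δ (h2inv u)) u := by
  have hr := h2inv_mem_Ioo hu
  obtain ⟨hs0, hs1⟩ := bconv_mem_Ioo hδ0 hδ1 hr
  refine ((hasDerivAt_h2 hs0.ne' (by linarith)).comp u
    ((hasDerivAt_bconv δ (h2inv u)).comp u (hasDerivAt_h2inv hu))).congr_deriv ?_
  have := (logRatio_pos hr).ne'
  have := (log_pos one_lt_two).ne'
  unfold slopeRatio
  field_simp

lemma exists_pos_hasDerivAt_deriv_h2_bconv_h2inv {δ u : ℝ} (hδ : δ ∈ Ioo 0 (1 / 2))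
    (hu : u ∈ Ioo 0 1) :
    ∃ d, 0 < d ∧ HasDerivAt (deriv fun v => h2 (bconv δ (h2inv v))) d u := by
  have hr := h2inv_mem_Ioo hu
  obtain ⟨d, hd, hslope⟩ := exists_pos_hasDerivAt_slopeRatio hδ hr
  have hderiv : deriv (fun v => h2 (bconv δ (h2inv v))) =ᶠ[𝓝 u] slopeRatio δ ∘ h2inv := by
    filter_upwards [Ioo_mem_nhds hu.1 hu.2] with v hv
    exact (hasDerivAt_h2_bconv_h2inv hδ.1.le hδ.2 hv).deriv
  exact ⟨d * (log 2 / logRatio (h2inv u)),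
    mul_pos hd (div_pos (log_pos one_lt_two) (logRatio_pos hr)),
    (hslope.comp u (hasDerivAt_h2inv hu)).congr_of_eventuallyEq hderiv⟩

/-- For every `δ ∈ (0, 1/2)`, the function `f(u) = h2(δ ⋆ h2⁻¹(u))` is twice
differentiable on `(0,1)` with `f''(u) > 0` there; in particular `f` is strictly
convex on `(0,1)`. -/
theorem stmt1 (δ : ℝ) (hδ : δ ∈ Set.Ioo (0 : ℝ) (1 / 2)) :
    (∀ u ∈ Set.Ioo (0 : ℝ) 1,
      DifferentiableAt ℝ (fun u => h2 (bconv δ (h2inv u))) u ∧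
      DifferentiableAt ℝ (deriv (fun u => h2 (bconv δ (h2inv u)))) u ∧
      0 < deriv (deriv (fun u => h2 (bconv δ (h2inv u)))) u) ∧
    StrictConvexOn ℝ (Set.Ioo (0 : ℝ) 1) (fun u => h2 (bconv δ (h2inv u))) := by
  have hf' := fun u (hu : u ∈ Ioo (0 : ℝ) 1) => hasDerivAt_h2_bconv_h2inv hδ.1.le hδ.2 hu
  have hf'' := fun u (hu : u ∈ Ioo (0 : ℝ) 1) =>
    exists_pos_hasDerivAt_deriv_h2_bconv_h2inv hδ hu
  refine ⟨fun u hu => ?_, ?_⟩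
  · obtain ⟨d, hd, h⟩ := hf'' u hu
    exact ⟨(hf' u hu).differentiableAt, h.differentiableAt, h.deriv ▸ hd⟩
  · refine strictConvexOn_of_deriv2_pos (convex_Ioo 0 1)
      (fun u hu => (hf' u hu).continuousAt.continuousWithinAt) fun u hu => ?_
    rw [interior_Ioo] at hu
    obtain ⟨d, hd, h⟩ := hf'' u hu
    rwa [Function.iterate_succ_apply, Function.iterate_one, h.deriv]
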